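/- arXiv:2509.14835 — 2 statements merged into one kernel-verified Lean document; each statement's English description precedes it below -/
import Mathlib

section
/- Under the General Assumption, suppose l₁ + l₂ = t and l₁ > 1 and l₂ > 1. If l₁ = s₁^(1) and l₂ ≥ s₂^(d), then f^(1)[U]_l = 0 or f^(d)[U]_l = 0. -/
open scoped BigOperators

namespace BMS

/-- Index pairs in ℕ × ℕ. -/
abbrev Pair : Type := ℕ × ℕ

/-- The componentwise partial order `⪯` on ℕ×ℕ. -/
def Preceq (n m : Pair) : Prop := n.1 ≤ m.1 ∧ n.2 ≤ m.2

instance (n m : Pair) : Decidable (Preceq n m) :=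
  inferInstanceAs (Decidable (n.1 ≤ m.1 ∧ n.2 ≤ m.2))

/-- The lexicographic order on exponents, with `X₁ > X₂`. -/
def LexLt (a b : Pair) : Prop := a.1 < b.1 ∨ (a.1 = b.1 ∧ a.2 < b.2)

/-- The graded order on exponents, with `X₂ > X₁`. -/
def GrLt (a b : Pair) : Prop :=
  a.1 + a.2 < b.1 + b.2 ∨ (a.1 + a.2 = b.1 + b.2 ∧ a.2 < b.2)

section
variable {L : Type*} [Field L]

/-- `s` is the `lt`-largest exponent occurring in (the support of) the polynomial `f`,
i.e. `LP f = s`. -/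
def IsLP (lt : Pair → Pair → Prop) (f : Pair →₀ L) (s : Pair) : Prop :=
  s ∈ f.support ∧ ∀ m ∈ f.support, m = s ∨ lt m s

/-- The value `f[U]_n`, where `s = LP f`. -/
def evalArr (U : Pair → L) (f : Pair →₀ L) (s n : Pair) : L :=
  if Preceq s n then ∑ m ∈ f.support, f m * U (m.1 + n.1 - s.1, m.2 + n.2 - s.2) else 0

/-- `f` (with `LP f = s`) generates the finite subarray `u^l`,
i.e. `f[U]_k = 0` for every `k` with `LP f ⪯ k` and `k <_T l`. -/
def GeneratesUpTo (lt : Pair → Pair → Prop) (U : Pair → L) (f : Pair →₀ L)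
    (s l : Pair) : Prop :=
  ∀ k : Pair, Preceq s k → lt k l → evalArr U f s k = 0

/-- `f` generates the whole doubly periodic array `U`, i.e. `f ∈ Λ(U)`
(the zero polynomial generates `U` by convention). -/
def GeneratesTable (lt : Pair → Pair → Prop) (U : Pair → L) (f : Pair →₀ L) : Prop :=
  f = 0 ∨ ∃ s : Pair, IsLP lt f s ∧ ∀ n : Pair, Preceq s n → evalArr U f s n = 0

/-- The footprint `Δ(F)` determined by the defining points `s 0, …, s (d-1)`:
`Δ(F) = ⋃_{i=1}^{d-1} Δ_{(s₁⁽ⁱ⁾ - 1, s₂⁽ⁱ⁺¹⁾ - 1)}`. -/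
def DeltaF (d : ℕ) (s : Fin d → Pair) : Set Pair :=
  {n | ∃ i : Fin d, ∃ h : (i : ℕ) + 1 < d,
    n.1 < (s i).1 ∧ n.2 < (s ⟨(i : ℕ) + 1, h⟩).2}

/-- `{f 0, …, f (d-1)}`, with `LP (f i) = s i`, is a minimal set of polynomials
for the subarray `u^l`. -/
structure IsMinimalSet (lt : Pair → Pair → Prop) (U : Pair → L) (l : Pair) (d : ℕ)
    (f : Fin d → (Pair →₀ L)) (s : Fin d → Pair) : Prop where
  isLP : ∀ i, IsLP lt (f i) (s i)
  gen : ∀ i, GeneratesUpTo lt U (f i) (s i) l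
  anti1 : ∀ i j : Fin d, i < j → (s j).1 < (s i).1
  mono2 : ∀ i j : Fin d, i < j → (s i).2 < (s j).2
  last1 : ∀ h : 0 < d, (s ⟨d - 1, Nat.sub_lt h Nat.one_pos⟩).1 = 0
  first2 : ∀ h : 0 < d, (s ⟨0, h⟩).2 = 0
  minimal : ∀ (g : Pair →₀ L) (sg : Pair), IsLP lt g sg → sg ∈ DeltaF d s →
    ¬ GeneratesUpTo lt U g sg l

/-- A finite set `G ⊆ Λ(U)` is a Groebner basis for the ideal `Λ(U)` w.r.t. `lt`:
for every nonzero `f ∈ Λ(U)` there is `g ∈ G` with `X^{LP g} ∣ X^{LP f}`. -/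
def IsGroebnerBasis (lt : Pair → Pair → Prop) (U : Pair → L)
    (G : Set (Pair →₀ L)) : Prop :=
  G.Finite ∧ (∀ g ∈ G, GeneratesTable lt U g) ∧
  ∀ fp : Pair →₀ L, fp ≠ 0 → GeneratesTable lt U fp →
    ∀ sf : Pair, IsLP lt fp sf → ∃ g ∈ G, ∃ sg : Pair, IsLP lt g sg ∧ Preceq sg sf

/-- `c • X^a * g` : multiply the polynomial `g` by the monomial `c·X₁^{a.1}·X₂^{a.2}`. -/
noncomputable def shiftScale (c : L) (a : Pair) (g : Pair →₀ L) : Pair →₀ L :=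
  c • Finsupp.mapDomain (· + a) g

/-- The set of indexes `S(t)`. -/
def Sset (t : ℕ) : Set Pair :=
  {p | (p.1 = 0 ∧ p.2 ≤ 2 * t - 1) ∨ (p.2 = 0 ∧ p.1 ≤ 2 * t - 1) ∨
    (p.1 ≠ 0 ∧ p.2 ≠ 0 ∧ p.1 + p.2 ≤ t)}

/-- `S(t)` satisfies the l-condition: `u_{(0,j)} ≠ 0` for some `j < t`. -/
def LCond (U : Pair → L) (t : ℕ) : Prop := ∃ j : ℕ, j < t ∧ U (0, j) ≠ 0

/-- `S(t)` satisfies the g-condition: `u_{(i,j)} ≠ 0` for some `(i,j)` with `i + j = 1`. -/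
def GCond (U : Pair → L) (t : ℕ) : Prop := ∃ p : Pair, p.1 + p.2 = 1 ∧ U p ≠ 0

end

section
variable {F L : Type*} [Field F] [Field L] [Algebra F L]

/-- Evaluation of (the canonical representative of) `e ∈ 𝔽(r₁,r₂)` at a point of `L × L`. -/
def polyEval (e : Pair →₀ F) (x y : L) : L :=
  ∑ m ∈ e.support, algebraMap F L (e m) * x ^ m.1 * y ^ m.2

/-- `U` is the syndrome table afforded by `τ` and `e`:
`u_n = e(α₁^{τ₁+n₁}, α₂^{τ₂+n₂})`, where `e` is a canonical representative
(exponents below `(r₁, r₂)`) and `τ ∈ ℤ_{r₁} × ℤ_{r₂}`. -/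
def IsSyndromeTable (r₁ r₂ : ℕ) (α₁ α₂ : L) (τ : Pair) (e : Pair →₀ F)
    (U : Pair → L) : Prop :=
  (∀ m ∈ e.support, m.1 < r₁ ∧ m.2 < r₂) ∧ τ.1 < r₁ ∧ τ.2 < r₂ ∧
  ∀ n : Pair, U n = polyEval e (α₁ ^ (τ.1 + n.1)) (α₂ ^ (τ.2 + n.2))

/-- Basic data of the general assumption: `q` a prime power, `𝔽 = 𝔽_q`,
`gcd(q, r₁r₂) = 1`, `αᵢ` a primitive `rᵢ`-th root of unity in the extension `𝕃`,
`U` the syndrome table afforded by `τ` and `e`, and `ω(e) ≤ t ≤ ⌊rᵢ/2⌋`. -/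
structure Setup (q r₁ r₂ t : ℕ) {F L : Type*} [Field F] [Fintype F] [Field L]
    [Algebra F L] (α₁ α₂ : L) (τ : Pair) (e : Pair →₀ F) (U : Pair → L) : Prop where
  prime_pow : ∃ p n : ℕ, p.Prime ∧ 0 < n ∧ q = p ^ n
  card_F : Fintype.card F = q
  coprime : Nat.Coprime q (r₁ * r₂)
  prim1 : IsPrimitiveRoot α₁ r₁
  prim2 : IsPrimitiveRoot α₂ r₂
  syndrome : IsSyndromeTable r₁ r₂ α₁ α₂ τ e U
  weight_le : e.support.card ≤ t
  t_le1 : t ≤ r₁ / 2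
  t_le2 : t ≤ r₂ / 2

end

/-!
The `l₁ + l₂ + 1 = t + 1` monomials on the two axes below `l` outnumber the `ω(e) ≤ t` error
locators, so some nonzero `g` supported on them vanishes at every locator and hence annihilates
the whole syndrome table. Its leading point lies on an axis, so `s⁽ᵈ⁾ + LP g ⪯ l` (first axis,
since `s⁽ᵈ⁾ = (0, s₂⁽ᵈ⁾)`) or `s⁽¹⁾ + LP g ⪯ l` (second axis, since `s⁽¹⁾ = (l₁, 0)`). A polynomial
generating `u^l` whose leading point plus `LP g` lies below `l` has zero discrepancy at `l`.
-/

theorem lexLt_add_right {a b : Pair} (h : LexLt a b) (c : Pair) : LexLt (a + c) (b + c) := by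
  simp only [LexLt, Prod.fst_add, Prod.snd_add] at h ⊢
  omega

theorem grLt_add_right {a b : Pair} (h : GrLt a b) (c : Pair) : GrLt (a + c) (b + c) := by
  simp only [GrLt, Prod.fst_add, Prod.snd_add] at h ⊢
  omega

section LeadingPoint

variable {L : Type*} [Field L]

theorem exists_isLP_of_lt_iff {α : Type*} [LinearOrder α] {lt : Pair → Pair → Prop}
    (κ : Pair → α) (hκ : Function.Injective κ) (hlt : ∀ a b, lt a b ↔ κ a < κ b)
    {g : Pair →₀ L} (hg : g ≠ 0) : ∃ s, IsLP lt g s := by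
  obtain ⟨s, hs, hmax⟩ := g.support.exists_max_image κ (Finsupp.support_nonempty_iff.mpr hg)
  refine ⟨s, hs, fun m hm => ?_⟩
  rw [hlt, ← hκ.eq_iff]
  exact (hmax m hm).eq_or_lt

theorem exists_isLP_lexLt {g : Pair →₀ L} (hg : g ≠ 0) : ∃ s, IsLP LexLt g s :=
  exists_isLP_of_lt_iff toLex toLex.injective (fun _ _ => Prod.Lex.toLex_lt_toLex.symm) hg

theorem exists_isLP_grLt {g : Pair →₀ L} (hg : g ≠ 0) : ∃ s, IsLP GrLt g s := by
  refine exists_isLP_of_lt_iff (fun a : Pair => toLex (a.1 + a.2, a.2)) (fun a b h => ?_)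
    (fun _ _ => Prod.Lex.toLex_lt_toLex.symm) hg
  simp only [toLex_inj, Prod.mk.injEq] at h
  exact Prod.ext (by omega) h.2

end LeadingPoint

section Generation

variable {L : Type*} [Field L] {U : Pair → L}

theorem evalArr_add (f : Pair →₀ L) (s c : Pair) :
    evalArr U f s (s + c) = ∑ m ∈ f.support, f m * U (m + c) := by
  rw [evalArr, if_pos ⟨Nat.le_add_right _ _, Nat.le_add_right _ _⟩]
  refine Finset.sum_congr rfl fun m _ => ?_
  congr 2
  ext <;> simp only [Prod.fst_add, Prod.snd_add] <;> omega

/-- Sakata's exchange argument: expanding `∑ g_m f_{m'} u_{m + m' + c}` once along `g` and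
once along `f` gives `g_{LP g} · f[U]_l = 0`. -/
theorem GeneratesUpTo.evalArr_eq_zero {lt : Pair → Pair → Prop}
    (hadd : ∀ a b c : Pair, lt a b → lt (a + c) (b + c))
    {f g : Pair →₀ L} {sf sg l : Pair} (hfgen : GeneratesUpTo lt U f sf l)
    (hg : IsLP lt g sg) (hgU : ∀ n, Preceq sg n → evalArr U g sg n = 0)
    (hle : Preceq (sf + sg) l) : evalArr U f sf l = 0 := by
  obtain ⟨c, rfl⟩ : ∃ c, l = sf + sg + c :=
    exists_add_of_le (Prod.mk_le_mk.mpr hle)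
  have hsum_f : ∑ m ∈ g.support, g m * evalArr U f sf (sf + (m + c))
      = g sg * evalArr U f sf (sf + sg + c) := by
    rw [Finset.sum_eq_single_of_mem sg hg.1, add_assoc]
    intro m hm hne
    have hlt := hadd m sg (sf + c) ((hg.2 m hm).resolve_left hne)
    rw [show m + (sf + c) = sf + (m + c) by abel, show sg + (sf + c) = sf + sg + c by abel] at hlt
    rw [hfgen _ ⟨Nat.le_add_right _ _, Nat.le_add_right _ _⟩ hlt, mul_zero]
  have hsum_g : ∑ m ∈ g.support, g m * evalArr U f sf (sf + (m + c)) = 0 := by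
    calc ∑ m ∈ g.support, g m * evalArr U f sf (sf + (m + c))
        = ∑ m' ∈ f.support, f m' * ∑ m ∈ g.support, g m * U (m + (m' + c)) := by
          simp only [evalArr_add, Finset.mul_sum]
          rw [Finset.sum_comm]
          refine Finset.sum_congr rfl fun m' _ => Finset.sum_congr rfl fun m _ => ?_
          rw [add_left_comm m']
          ring
      _ = 0 := Finset.sum_eq_zero fun m' _ => by rw [← evalArr_add, hgU _ ⟨by simp, by simp⟩,
          mul_zero]
  rw [hsum_f] at hsum_g
  exact (mul_eq_zero.mp hsum_g).resolve_left (Finsupp.mem_support_iff.mp hg.1)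

end Generation

section Syndrome

variable {F L : Type*} [Field F] [Field L] [Algebra F L]

theorem polyEval_self (g : Pair →₀ L) (x y : L) :
    polyEval g x y = ∑ m ∈ g.support, g m * x ^ m.1 * y ^ m.2 := by
  simp only [polyEval, Algebra.algebraMap_self, RingHom.id_apply]

theorem sum_mul_shift_eq_sum_polyEval {α₁ α₂ : L} {τ : Pair} {e : Pair →₀ F} {U : Pair → L}
    (hU : ∀ n : Pair, U n = polyEval e (α₁ ^ (τ.1 + n.1)) (α₂ ^ (τ.2 + n.2)))
    (g : Pair →₀ L) (c : Pair) :
    ∑ m ∈ g.support, g m * U (m + c) = ∑ k ∈ e.support,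
      algebraMap F L (e k) * (α₁ ^ k.1) ^ (τ.1 + c.1) * (α₂ ^ k.2) ^ (τ.2 + c.2) *
        polyEval g (α₁ ^ k.1) (α₂ ^ k.2) := by
  have hpow (α : L) (a b i j : ℕ) :
      (α ^ (a + (b + i))) ^ j = (α ^ j) ^ (a + i) * (α ^ j) ^ b := by
    rw [← pow_mul, ← pow_mul, ← pow_mul, ← pow_add]
    ring_nf
  simp only [hU, polyEval, Finset.mul_sum]
  rw [Finset.sum_comm]
  refine Finset.sum_congr rfl fun k _ => Finset.sum_congr rfl fun m _ => ?_
  simp only [Prod.fst_add, Prod.snd_add, hpow, Algebra.algebraMap_self, RingHom.id_apply]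
  ring

theorem evalArr_eq_zero_of_polyEval_eq_zero {r₁ r₂ : ℕ} {α₁ α₂ : L} {τ : Pair}
    {e : Pair →₀ F} {U : Pair → L} (hsyn : IsSyndromeTable r₁ r₂ α₁ α₂ τ e U)
    {g : Pair →₀ L} (hvan : ∀ k ∈ e.support, polyEval g (α₁ ^ k.1) (α₂ ^ k.2) = 0)
    {sg n : Pair} (hn : Preceq sg n) : evalArr U g sg n = 0 := by
  obtain ⟨c, rfl⟩ : ∃ c, n = sg + c := exists_add_of_le (Prod.mk_le_mk.mpr hn)
  rw [evalArr_add, sum_mul_shift_eq_sum_polyEval hsyn.2.2.2]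
  exact Finset.sum_eq_zero fun k hk => by rw [hvan k hk, mul_zero]

end Syndrome

theorem exists_polyEval_eq_zero_of_card_lt {L ι : Type*} [Field L] (Δ : Finset Pair)
    (K : Finset ι) (x y : ι → L) (hcard : K.card < Δ.card) :
    ∃ g : Pair →₀ L, g ≠ 0 ∧ ↑g.support ⊆ (Δ : Set Pair) ∧
      ∀ k ∈ K, polyEval g (x k) (y k) = 0 := by
  let toSupported := (Finsupp.supportedEquivFinsupp (M := L) (R := L) (Δ : Set Pair)).symm
  let ev : (Pair →₀ L) →ₗ[L] (K → L) :=
    Finsupp.linearCombination L fun m k => x k ^ m.1 * y k ^ m.2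
  let T := ev ∘ₗ (Finsupp.supported L L (Δ : Set Pair)).subtype ∘ₗ toSupported.toLinearMap
  have hker : LinearMap.ker T ≠ ⊥ := LinearMap.ker_ne_bot_of_finrank_lt <| by
    simpa [Module.finrank_finsupp_self, Module.finrank_fintype_fun_eq_card] using hcard
  obtain ⟨v, hv, hv0⟩ := Submodule.exists_mem_ne_zero_of_ne_bot hker
  refine ⟨toSupported v, fun h => hv0 (toSupported.map_eq_zero_iff.mp (Subtype.ext h)),
    (Finsupp.mem_supported _ _).mp (toSupported v).2, fun k hk => ?_⟩
  have := congrFun (LinearMap.mem_ker.mp hv) ⟨k, hk⟩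
  simp only [T, LinearMap.comp_apply, ev, Finsupp.linearCombination_apply, Finsupp.sum,
    Finset.sum_apply, Pi.smul_apply, smul_eq_mul, Pi.zero_apply] at this
  rw [polyEval_self, ← this]
  exact Finset.sum_congr rfl fun m _ => mul_assoc _ _ _

theorem exists_annihilator_on_axes {F L : Type*} [Field F] [Field L] [Algebra F L]
    {r₁ r₂ : ℕ} {α₁ α₂ : L} {τ : Pair} {e : Pair →₀ F} {U : Pair → L}
    {lt : Pair → Pair → Prop} (hLP : ∀ g : Pair →₀ L, g ≠ 0 → ∃ s, IsLP lt g s)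
    (hsyn : IsSyndromeTable r₁ r₂ α₁ α₂ τ e U) {a b : ℕ} (hω : e.support.card ≤ a + b) :
    ∃ (g : Pair →₀ L) (sg : Pair), IsLP lt g sg ∧
      (∀ n, Preceq sg n → evalArr U g sg n = 0) ∧
      ((sg.1 ≤ a ∧ sg.2 = 0) ∨ (sg.1 = 0 ∧ sg.2 ≤ b)) := by
  let axes : Finset Pair := Finset.Icc 1 a ×ˢ {0} ∪ {0} ×ˢ Finset.range (b + 1)
  have hcard : axes.card = a + (b + 1) := by
    rw [Finset.card_union_of_disjoint (Finset.disjoint_left.mpr fun p hp hq => by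
      simp only [Finset.mem_product, Finset.mem_Icc, Finset.mem_singleton] at hp hq; omega)]
    simp
  obtain ⟨g, hg0, hg_axes, hvan⟩ := exists_polyEval_eq_zero_of_card_lt axes e.support
    (fun k => α₁ ^ k.1) (fun k => α₂ ^ k.2) (by omega)
  obtain ⟨sg, hsg⟩ := hLP g hg0
  refine ⟨g, sg, hsg, fun n => evalArr_eq_zero_of_polyEval_eq_zero hsyn hvan, ?_⟩
  have hsg_axes := hg_axes hsg.1
  simp only [axes, Finset.coe_union, Set.mem_union, Finset.mem_coe, Finset.mem_product,
    Finset.mem_Icc, Finset.mem_singleton, Finset.mem_range] at hsg_axes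
  omega

theorem statement7_general{q r₁ r₂ t : ℕ} {F L : Type*} [Field F] [Fintype F] [Field L]
    [Algebra F L] {α₁ α₂ : L} {τ : Pair} {e : Pair →₀ F} {U : Pair → L}
    (hsetup : Setup q r₁ r₂ t α₁ α₂ τ e U)
{lt : Pair → Pair → Prop}
    (hord : (lt = LexLt ∧ LCond U t) ∨ (lt = GrLt ∧ GCond U t))
    {l : Pair}
    {d : ℕ} {f : Fin d → (Pair →₀ L)} {s : Fin d → Pair}
    (hmin : IsMinimalSet lt U l d f s)
    (hsum : l.1 + l.2 = t) (hd0 : 0 < d)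
    (ha : l.1 = (s ⟨0, hd0⟩).1)
    (hb : (s ⟨d - 1, Nat.sub_lt hd0 Nat.one_pos⟩).2 ≤ l.2) :
    evalArr U (f ⟨0, hd0⟩) (s ⟨0, hd0⟩) l = 0 ∨
    evalArr U (f ⟨d - 1, Nat.sub_lt hd0 Nat.one_pos⟩)
      (s ⟨d - 1, Nat.sub_lt hd0 Nat.one_pos⟩) l = 0 := by
  obtain ⟨hadd, hLP⟩ : (∀ a b c : Pair, lt a b → lt (a + c) (b + c)) ∧
      ∀ g : Pair →₀ L, g ≠ 0 → ∃ s, IsLP lt g s := by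
    rcases hord with ⟨rfl, -⟩ | ⟨rfl, -⟩
    exacts [⟨fun _ _ c h => lexLt_add_right h c, fun _ => exists_isLP_lexLt⟩,
      ⟨fun _ _ c h => grLt_add_right h c, fun _ => exists_isLP_grLt⟩]
  obtain ⟨g, sg, hsg, hgU, hsg_axes⟩ :=
    exists_annihilator_on_axes hLP hsetup.syndrome (hsum ▸ hsetup.weight_le)
  have hfirst := hmin.first2 hd0
  have hlast := hmin.last1 hd0
  rcases hsg_axes with ⟨h1, h2⟩ | ⟨h1, h2⟩
  · refine .inr <| (hmin.gen _).evalArr_eq_zero hadd hsg hgU ⟨?_, ?_⟩ <;>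
      simp only [Prod.fst_add, Prod.snd_add] <;> omega
  · refine .inl <| (hmin.gen _).evalArr_eq_zero hadd hsg hgU ⟨?_, ?_⟩ <;>
      simp only [Prod.fst_add, Prod.snd_add] <;> omega

/-- if l₁ = s₁⁽¹⁾ and l₂ ≥ s₂⁽ᵈ⁾ then f⁽¹⁾[U]_l = 0 or f⁽ᵈ⁾[U]_l = 0. -/
theorem statement7{q r₁ r₂ t : ℕ} {F L : Type*} [Field F] [Fintype F] [Field L]
    [Algebra F L] {α₁ α₂ : L} {τ : Pair} {e : Pair →₀ F} {U : Pair → L}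
    (hsetup : Setup q r₁ r₂ t α₁ α₂ τ e U)
{lt : Pair → Pair → Prop}
    (hord : (lt = LexLt ∧ LCond U t) ∨ (lt = GrLt ∧ GCond U t))
    {l : Pair} (hl : l ∈ Sset t)
    {d : ℕ} {f : Fin d → (Pair →₀ L)} {s : Fin d → Pair}
    (hmin : IsMinimalSet lt U l d f s)
    (hsum : l.1 + l.2 = t) (hl1 : 1 < l.1) (hl2 : 1 < l.2) (hd0 : 0 < d)
    (ha : l.1 = (s ⟨0, hd0⟩).1)
    (hb : (s ⟨d - 1, Nat.sub_lt hd0 Nat.one_pos⟩).2 ≤ l.2) :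
    evalArr U (f ⟨0, hd0⟩) (s ⟨0, hd0⟩) l = 0 ∨
    evalArr U (f ⟨d - 1, Nat.sub_lt hd0 Nat.one_pos⟩)
      (s ⟨d - 1, Nat.sub_lt hd0 Nat.one_pos⟩) l = 0 :=
  statement7_general hsetup hord hmin hsum hd0 ha hb

end BMS
end

section
/- Under the General Assumption, suppose l₁ + l₂ = t and l₁ > 1 and l₂ > 1. If l₁ > s₁^(1), then f^(1)[U]_l = 0. -/
open scoped BigOperators

namespace BMS

section Aux

variable {L : Type*} [Field L]

/-- Existence of a maximum of a finite nonempty set w.r.t. a trichotomous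
transitive relation. -/
lemma exists_lt_max (lt : Pair → Pair → Prop)
    (htri : ∀ a b : Pair, a = b ∨ lt a b ∨ lt b a)
    (htr : ∀ a b c : Pair, lt a b → lt b c → lt a c)
    (S : Finset Pair) (hS : S.Nonempty) :
    ∃ n ∈ S, ∀ m ∈ S, m = n ∨ lt m n := by
  classical
  induction S using Finset.induction_on with
  | empty => exact absurd hS (by simp)
  | @insert a S haS ih =>
    rcases S.eq_empty_or_nonempty with rfl | hSne
    · refine ⟨a, by simp, ?_⟩
      intro m hm
      left
      simpa using hm
    · obtain ⟨n, hnS, hmax⟩ := ih hSne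
      rcases htri a n with rfl | h | h
      · refine ⟨a, by simp, ?_⟩
        intro m hm
        rcases Finset.mem_insert.mp hm with rfl | hm
        · exact Or.inl rfl
        · exact hmax m hm
      · refine ⟨n, by simp [hnS], ?_⟩
        intro m hm
        rcases Finset.mem_insert.mp hm with rfl | hm
        · exact Or.inr h
        · exact hmax m hm
      · refine ⟨a, by simp, ?_⟩
        intro m hm
        rcases Finset.mem_insert.mp hm with rfl | hm
        · exact Or.inl rfl
        · rcases hmax m hm with rfl | h'
          · exact Or.inr h
          · exact Or.inr (htr _ _ _ h' h)

/-- A polynomial vanishing at all the points `(B m, C m)`, `m ∈ E`, generates the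
whole table `U n = ∑_{m ∈ E} c m * B m ^ n.1 * C m ^ n.2`. -/
lemma vanish_generates {ι : Type*} (E : Finset ι) (c B C : ι → L) (U : Pair → L)
    (hU : ∀ n : Pair, U n = ∑ m ∈ E, c m * B m ^ n.1 * C m ^ n.2)
    (g : Pair →₀ L) (v : Pair)
    (hvan : ∀ m ∈ E, ∑ k ∈ g.support, g k * B m ^ k.1 * C m ^ k.2 = 0) :
    ∀ n : Pair, Preceq v n → evalArr U g v n = 0 := by
  intro n hn
  have hn1 : v.1 ≤ n.1 := hn.1
  have hn2 : v.2 ≤ n.2 := hn.2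
  simp only [evalArr, if_pos hn]
  have expand : ∀ k ∈ g.support,
      g k * U (k.1 + n.1 - v.1, k.2 + n.2 - v.2)
        = ∑ m ∈ E, g k * (B m ^ k.1 * C m ^ k.2) *
            (c m * (B m ^ (n.1 - v.1) * C m ^ (n.2 - v.2))) := by
    intro k _
    rw [hU, Finset.mul_sum]
    refine Finset.sum_congr rfl fun m _ => ?_
    have e1 : k.1 + n.1 - v.1 = k.1 + (n.1 - v.1) := by omega
    have e2 : k.2 + n.2 - v.2 = k.2 + (n.2 - v.2) := by omega
    rw [e1, e2, pow_add, pow_add]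
    ring
  rw [Finset.sum_congr rfl expand, Finset.sum_comm]
  refine Finset.sum_eq_zero fun m hm => ?_
  have : ∑ k ∈ g.support, g k * (B m ^ k.1 * C m ^ k.2) *
      (c m * (B m ^ (n.1 - v.1) * C m ^ (n.2 - v.2)))
      = (∑ k ∈ g.support, g k * B m ^ k.1 * C m ^ k.2) *
        (c m * (B m ^ (n.1 - v.1) * C m ^ (n.2 - v.2))) := by
    rw [Finset.sum_mul]
    refine Finset.sum_congr rfl fun k _ => by ring
  rw [this, hvan m hm, zero_mul]

/-- Sakata's exchange lemma: if `f` generates `u^l`, `g` generates the whole table,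
and `LP f + LP g ⪯ l`, then `f[U]_l = 0`. -/
lemma sakata (lt : Pair → Pair → Prop)
    (hadd : ∀ (a b x : Pair), lt a b → lt (a.1 + x.1, a.2 + x.2) (b.1 + x.1, b.2 + x.2))
    (U : Pair → L) (f g : Pair →₀ L) (sf v l : Pair)
    (hgen : GeneratesUpTo lt U f sf l)
    (hgv : IsLP lt g v)
    (hG : ∀ n : Pair, Preceq v n → evalArr U g v n = 0)
    (h1 : sf.1 + v.1 ≤ l.1) (h2 : sf.2 + v.2 ≤ l.2) :
    evalArr U f sf l = 0 := by
  classical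
  obtain ⟨hvmem, hvmax⟩ := hgv
  set p1 := l.1 - sf.1 - v.1 with hp1
  set p2 := l.2 - sf.2 - v.2 with hp2
  have hleq : l = (sf.1 + v.1 + p1, sf.2 + v.2 + p2) := by
    rw [Prod.ext_iff]
    constructor <;> simp <;> omega
  have key : ∀ k : Pair, k ∈ g.support → k ≠ v →
      evalArr U f sf (sf.1 + k.1 + p1, sf.2 + k.2 + p2) = 0 := by
    intro k hk hkv
    rcases hvmax k hk with rfl | hlt
    · exact absurd rfl hkv
    refine hgen _ ⟨by simp; omega, by simp; omega⟩ ?_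
    have h := hadd k v (sf.1 + p1, sf.2 + p2) hlt
    have hA : ((k.1 + (sf.1 + p1), k.2 + (sf.2 + p2)) : Pair)
        = (sf.1 + k.1 + p1, sf.2 + k.2 + p2) := by
      rw [Prod.ext_iff]; constructor <;> simp <;> omega
    have hB : ((v.1 + (sf.1 + p1), v.2 + (sf.2 + p2)) : Pair) = l := by
      rw [hleq, Prod.ext_iff]; constructor <;> simp <;> omega
    rwa [hA, hB] at h
  have hT1 : ∑ k ∈ g.support, g k * evalArr U f sf (sf.1 + k.1 + p1, sf.2 + k.2 + p2)
      = g v * evalArr U f sf l := by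
    rw [Finset.sum_eq_single v]
    · have : ((sf.1 + v.1 + p1, sf.2 + v.2 + p2) : Pair) = l := hleq.symm
      rw [this]
    · intro k hk hkv
      rw [key k hk hkv, mul_zero]
    · intro hv
      exact absurd hvmem hv
  have hT2 : ∑ k ∈ g.support, g k * evalArr U f sf (sf.1 + k.1 + p1, sf.2 + k.2 + p2)
      = 0 := by
    have expand : ∀ k ∈ g.support,
        g k * evalArr U f sf (sf.1 + k.1 + p1, sf.2 + k.2 + p2)
          = ∑ m ∈ f.support, g k * (f m * U (m.1 + k.1 + p1, m.2 + k.2 + p2)) := by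
      intro k _
      have hpre : Preceq sf (sf.1 + k.1 + p1, sf.2 + k.2 + p2) := ⟨by simp; omega, by simp; omega⟩
      simp only [evalArr, if_pos hpre]
      rw [Finset.mul_sum]
      refine Finset.sum_congr rfl fun m _ => ?_
      have : ((m.1 + (sf.1 + k.1 + p1) - sf.1, m.2 + (sf.2 + k.2 + p2) - sf.2) : Pair)
          = (m.1 + k.1 + p1, m.2 + k.2 + p2) := by
        rw [Prod.ext_iff]; constructor <;> simp <;> omega
      rw [this]
    rw [Finset.sum_congr rfl expand, Finset.sum_comm]
    refine Finset.sum_eq_zero fun m _ => ?_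
    have hpre : Preceq v (v.1 + m.1 + p1, v.2 + m.2 + p2) := ⟨by simp; omega, by simp; omega⟩
    have hg0 := hG _ hpre
    simp only [evalArr, if_pos hpre] at hg0
    have : ∑ k ∈ g.support, g k * (f m * U (m.1 + k.1 + p1, m.2 + k.2 + p2))
        = f m * ∑ k ∈ g.support,
            g k * U (k.1 + (v.1 + m.1 + p1) - v.1, k.2 + (v.2 + m.2 + p2) - v.2) := by
      rw [Finset.mul_sum]
      refine Finset.sum_congr rfl fun k _ => ?_
      have : ((k.1 + (v.1 + m.1 + p1) - v.1, k.2 + (v.2 + m.2 + p2) - v.2) : Pair)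
          = (m.1 + k.1 + p1, m.2 + k.2 + p2) := by
        rw [Prod.ext_iff]; constructor <;> simp <;> omega
      rw [this]; ring
    rw [this, hg0, mul_zero]
  have hgv0 : g v ≠ 0 := Finsupp.mem_support_iff.mp hvmem
  have h0 : g v * evalArr U f sf l = 0 := hT1.symm.trans hT2
  exact (mul_eq_zero.mp h0).resolve_left hgv0

/-- Counting: a set of exponents none of which can be the leading point of a
polynomial vanishing at all the points `(B m, C m)`, `m ∈ E`, has at most `|E|`
elements. -/
lemma card_le_of_bad (lt : Pair → Pair → Prop)
    (htri : ∀ a b : Pair, a = b ∨ lt a b ∨ lt b a)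
    (htr : ∀ a b c : Pair, lt a b → lt b c → lt a c)
    {ι : Type*} (E : Finset ι) (B C : ι → L) (N : Finset Pair)
    (hbad : ∀ (g : Pair →₀ L) (n : Pair), IsLP lt g n → n ∈ N →
      ∃ m ∈ E, ∑ k ∈ g.support, g k * B m ^ k.1 * C m ^ k.2 ≠ 0) :
    N.card ≤ E.card := by
  classical
  have hLI : LinearIndependent L
      (fun (n : {x // x ∈ N}) (m : {x // x ∈ E}) =>
        B (m : ι) ^ (n : Pair).1 * C (m : ι) ^ (n : Pair).2) := by
    rw [Fintype.linearIndependent_iff]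
    intro a ha
    by_contra hcon
    push_neg at hcon
    obtain ⟨i₀, hi₀⟩ := hcon
    set g : Pair →₀ L := Finsupp.onFinset N
      (fun n => if h : n ∈ N then a ⟨n, h⟩ else 0)
      (by intro n hn; by_contra h; simp [h] at hn) with hgdef
    have hsupp : g.support ⊆ N := Finsupp.support_onFinset_subset
    have hgi : ∀ (n : Pair) (h : n ∈ N), g n = a ⟨n, h⟩ := by
      intro n h
      rw [hgdef, Finsupp.onFinset_apply, dif_pos h]
    have hne : (i₀ : Pair) ∈ g.support := by
      rw [Finsupp.mem_support_iff, hgi _ i₀.2]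
      exact hi₀
    obtain ⟨n', hn'mem, hn'max⟩ := exists_lt_max lt htri htr g.support ⟨_, hne⟩
    have hLP : IsLP lt g n' := ⟨hn'mem, hn'max⟩
    obtain ⟨m, hm, hevm⟩ := hbad g n' hLP (hsupp hn'mem)
    apply hevm
    have h0 : ∑ i : {x // x ∈ N}, a i * (B m ^ (i : Pair).1 * C m ^ (i : Pair).2) = 0 := by
      have h := congrFun ha ⟨m, hm⟩
      simpa using h
    calc ∑ k ∈ g.support, g k * B m ^ k.1 * C m ^ k.2
        = ∑ k ∈ N, g k * B m ^ k.1 * C m ^ k.2 := by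
          refine Finset.sum_subset hsupp fun k _ hk => ?_
          rw [Finsupp.notMem_support_iff.mp hk]
          ring
      _ = ∑ i : {x // x ∈ N}, g (i : Pair) * B m ^ (i : Pair).1 * C m ^ (i : Pair).2 :=
          (Finset.sum_coe_sort N fun k => g k * B m ^ k.1 * C m ^ k.2).symm
      _ = ∑ i : {x // x ∈ N}, a i * (B m ^ (i : Pair).1 * C m ^ (i : Pair).2) := by
          refine Finset.sum_congr rfl fun i _ => ?_
          rw [hgi (i : Pair) i.2]
          ring
      _ = 0 := h0
  have h1 : Fintype.card {x // x ∈ N} ≤ Fintype.card {x // x ∈ E} := by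
    have h2 := hLI.fintype_card_le_finrank
    rwa [Module.finrank_fintype_fun_eq_card] at h2
  simpa using h1

end Aux

/-- if l₁ > s₁⁽¹⁾ then f⁽¹⁾[U]_l = 0. -/
theorem statement8{q r₁ r₂ t : ℕ} {F L : Type*} [Field F] [Fintype F] [Field L]
    [Algebra F L] {α₁ α₂ : L} {τ : Pair} {e : Pair →₀ F} {U : Pair → L}
    (hsetup : Setup q r₁ r₂ t α₁ α₂ τ e U)
{lt : Pair → Pair → Prop}
    (hord : (lt = LexLt ∧ LCond U t) ∨ (lt = GrLt ∧ GCond U t))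
    {l : Pair} (hl : l ∈ Sset t)
    {d : ℕ} {f : Fin d → (Pair →₀ L)} {s : Fin d → Pair}
    (hmin : IsMinimalSet lt U l d f s)
    (hsum : l.1 + l.2 = t) (hl1 : 1 < l.1) (hl2 : 1 < l.2) (hd0 : 0 < d)
    (ha : (s ⟨0, hd0⟩).1 < l.1) :
    evalArr U (f ⟨0, hd0⟩) (s ⟨0, hd0⟩) l = 0 := by
  classical
  obtain ⟨hexp, ht1, ht2, hUdef⟩ := hsetup.syndrome
  set c : Pair → L := fun m => algebraMap F L (e m) * α₁ ^ (m.1 * τ.1) * α₂ ^ (m.2 * τ.2)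
    with hc
  have hU : ∀ n : Pair,
      U n = ∑ m ∈ e.support, c m * (α₁ ^ m.1) ^ n.1 * (α₂ ^ m.2) ^ n.2 := by
    intro n
    rw [hUdef n]
    simp only [polyEval]
    refine Finset.sum_congr rfl fun m _ => ?_
    have k1 : (α₁ ^ (τ.1 + n.1)) ^ m.1 = α₁ ^ (m.1 * τ.1) * (α₁ ^ m.1) ^ n.1 := by
      rw [← pow_mul, ← pow_mul, ← pow_add]
      congr 1
      ring
    have k2 : (α₂ ^ (τ.2 + n.2)) ^ m.2 = α₂ ^ (m.2 * τ.2) * (α₂ ^ m.2) ^ n.2 := by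
      rw [← pow_mul, ← pow_mul, ← pow_add]
      congr 1
      ring
    rw [k1, k2, hc]
    ring
  have hadd : ∀ (a b x : Pair), lt a b → lt (a.1 + x.1, a.2 + x.2) (b.1 + x.1, b.2 + x.2) := by
    rcases hord with ⟨rfl, -⟩ | ⟨rfl, -⟩ <;>
      · intro a b x h
        simp only [LexLt, GrLt] at h ⊢
        omega
  have htri : ∀ a b : Pair, a = b ∨ lt a b ∨ lt b a := by
    rcases hord with ⟨rfl, -⟩ | ⟨rfl, -⟩ <;>
      · intro a b
        simp only [LexLt, GrLt, Prod.ext_iff]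
        omega
  have htr : ∀ a b c : Pair, lt a b → lt b c → lt a c := by
    rcases hord with ⟨rfl, -⟩ | ⟨rfl, -⟩ <;>
      · intro a b x h1 h2
        simp only [LexLt, GrLt] at h1 h2 ⊢
        omega
  set s0 : Pair := s ⟨0, hd0⟩ with hs0
  have hs02 : s0.2 = 0 := hmin.first2 hd0
  set a := l.1 - s0.1 with hadef
  have ha1 : 1 ≤ a := by omega
  by_cases hex : ∃ (g : Pair →₀ L) (v : Pair), IsLP lt g v ∧
      (∀ m ∈ e.support,
        ∑ k ∈ g.support, g k * (α₁ ^ m.1) ^ k.1 * (α₂ ^ m.2) ^ k.2 = 0) ∧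
      v.1 ≤ a ∧ v.2 ≤ l.2
  · obtain ⟨g, v, hgv, hvan, hv1, hv2⟩ := hex
    have hG := vanish_generates e.support c (fun m => α₁ ^ m.1) (fun m => α₂ ^ m.2)
      U hU g v hvan
    exact sakata lt hadd U (f ⟨0, hd0⟩) g s0 v l (hmin.gen ⟨0, hd0⟩) hgv hG
      (by omega) (by omega)
  · exfalso
    push_neg at hex
    set N : Finset Pair :=
      (Finset.range (a + 1) ×ˢ Finset.range (l.2 + 1)) ∪
        (Finset.Ico (a + 1) s0.1).image (fun i => ((i, 0) : Pair)) with hN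
    have hbad : ∀ (g : Pair →₀ L) (n : Pair), IsLP lt g n → n ∈ N →
        ∃ m ∈ e.support,
          ∑ k ∈ g.support, g k * (α₁ ^ m.1) ^ k.1 * (α₂ ^ m.2) ^ k.2 ≠ 0 := by
      intro g n hLP hn
      by_contra hcon
      push_neg at hcon
      rw [hN, Finset.mem_union] at hn
      rcases hn with hn | hn
      · obtain ⟨hn1, hn2⟩ := Finset.mem_product.mp hn
        rw [Finset.mem_range] at hn1 hn2
        have := hex g n hLP hcon (by omega)
        omega
      · obtain ⟨i, hi, hieq⟩ := Finset.mem_image.mp hn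
        rw [Finset.mem_Ico] at hi
        subst hieq
        have hd2 : 1 < d := by
          by_contra hdle
          have hd1 : d = 1 := by omega
          subst hd1
          have h0 : s0.1 = 0 := hmin.last1 hd0
          omega
        have hDelta : ((i, 0) : Pair) ∈ DeltaF d s := by
          refine ⟨⟨0, hd0⟩, by simpa using hd2, ?_, ?_⟩
          · exact hi.2
          · have hlt01 : (⟨0, hd0⟩ : Fin d) < ⟨1, hd2⟩ := by
              simp [Fin.mk_lt_mk]
            have h5 := hmin.mono2 ⟨0, hd0⟩ ⟨1, hd2⟩ hlt01
            rw [← hs0, hs02] at h5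
            exact h5
        have hgen' : GeneratesUpTo lt U g (i, 0) l := by
          intro k hk _
          exact vanish_generates e.support c (fun m => α₁ ^ m.1) (fun m => α₂ ^ m.2)
            U hU g (i, 0) hcon k hk
        exact hmin.minimal g (i, 0) hLP hDelta hgen'
    have hcard := card_le_of_bad lt htri htr e.support
      (fun m => α₁ ^ m.1) (fun m => α₂ ^ m.2) N hbad
    have hwt := hsetup.weight_le
    have hdisj : Disjoint (Finset.range (a + 1) ×ˢ Finset.range (l.2 + 1))
        ((Finset.Ico (a + 1) s0.1).image (fun i => ((i, 0) : Pair))) := by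
      rw [Finset.disjoint_left]
      intro x hx hx'
      obtain ⟨i, hi, heq⟩ := Finset.mem_image.mp hx'
      obtain ⟨h1, h2⟩ := Finset.mem_product.mp hx
      rw [Finset.mem_range] at h1
      rw [Finset.mem_Ico] at hi
      subst heq
      simp only at h1
      omega
    have hinj : Function.Injective (fun i : ℕ => ((i, 0) : Pair)) := by
      intro x y h
      simpa using h
    have hcardN : N.card = (a + 1) * (l.2 + 1) + (s0.1 - (a + 1)) := by
      rw [hN, Finset.card_union_of_disjoint hdisj, Finset.card_product,
        Finset.card_range, Finset.card_range, Finset.card_image_of_injective _ hinj,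
        Nat.card_Ico]
    have hexpand : (a + 1) * (l.2 + 1) = a * l.2 + a + l.2 + 1 := by ring
    have hcardN' : N.card = a * l.2 + a + l.2 + 1 + (s0.1 - (a + 1)) := by
      rw [hcardN, hexpand]
    have hml : 2 * a ≤ a * l.2 := by
      have : a * 2 ≤ a * l.2 := Nat.mul_le_mul_left a (by omega)
      omega
    generalize hX : a * l.2 = X at hcardN' hml
    omega

end BMS
end
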